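/- arXiv:2604.26792 — 3 statements merged into one kernel-verified Lean document; each statement's English description precedes it below -/
import Mathlib

section
/- For integers d ≥ 2, any diagonal unitary U = Σ_{n=0}^{d-1} e^{-iβ_n} |n⟩⟨n| on C^d can be written, up to a global phase e^{-i β̄} where β̄ = (1/d) Σ_n β_n, as a product of d-1 commuting adjacent two-level Z-rotations: U = e^{-i β̄} Π_{k=0}^{d-2} R_Z^{(k,k+1)}(θ_k) with θ_k = 2 Σ_{n=0}^{k} (β_n − β̄). -/
open Complex Finset

/-- Embedded two-level Z rotation on `ℂ^d`: acts as `e^{-iθ/2}` on `|b⟩`,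
`e^{+iθ/2}` on `|c⟩`, and identity elsewhere. -/
noncomputable def RZ (d : ℕ) (b c : Fin d) (θ : ℝ) : Matrix (Fin d) (Fin d) ℂ :=
  Matrix.diagonal (fun n =>
    if n = b then Complex.exp (-Complex.I * θ / 2)
    else if n = c then Complex.exp (Complex.I * θ / 2) else 1)

/-! The phase e^{-iβ_n} is e^{-iβ̄} times e^{-i(S_{n+1} - S_n)}, where S_k = Σ_{m<k} (β_m - β̄)
satisfies S_0 = S_d = 0. The rotation R_Z^{(k,k+1)}(2 S_{k+1}) contributes e^{-i S_{k+1}} at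
level k and e^{i S_{k+1}} at level k+1, so at level n the product of all rotations
telescopes to exactly e^{-i(S_{n+1} - S_n)}. -/

theorem Matrix.list_prod_ofFn_diagonal {ι R : Type*} [Fintype ι] [DecidableEq ι] [CommSemiring R]
    {m : ℕ} (f : Fin m → ι → R) :
    (List.ofFn fun k => Matrix.diagonal (f k)).prod = Matrix.diagonal (∏ k, f k) := by
  simpa [List.map_ofFn, List.prod_ofFn, Function.comp_def] using
    (map_list_prod (Matrix.diagonalRingHom ι R) (List.ofFn f)).symm

theorem RZ_adjacent (d k : ℕ) (hk : k < d) (hk' : k + 1 < d) (t : ℝ) :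
    RZ d ⟨k, hk⟩ ⟨k + 1, hk'⟩ (2 * t) = Matrix.diagonal fun n : Fin d =>
      if (n : ℕ) = k then exp (-(I * t)) else if (n : ℕ) = k + 1 then exp (I * t) else 1 := by
  unfold RZ
  congr 1
  funext n
  simp only [Fin.ext_iff]
  push_cast
  ring_nf

theorem prod_adjacent_phases (S : ℕ → ℂ) {d n : ℕ} (hn : n < d) (h0 : S 0 = 0) (hd : S d = 0) :
    ∏ k : Fin (d - 1), (if n = (k : ℕ) then exp (-S (k + 1))
      else if n = (k : ℕ) + 1 then exp (S (k + 1)) else 1) = exp (S n - S (n + 1)) := by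
  have hsplit : ∀ k : ℕ, (if n = k then exp (-S (k + 1))
      else if n = k + 1 then exp (S (k + 1)) else 1) =
      (if n = k then exp (-S (k + 1)) else 1) * (if n = k + 1 then exp (S (k + 1)) else 1) := by
    intro k
    split_ifs <;> first | omega | simp
  obtain ⟨m, rfl⟩ : ∃ m, d = m + 1 := ⟨d - 1, by omega⟩
  rw [Fin.prod_univ_eq_prod_range (fun k => if n = k then exp (-S (k + 1))
      else if n = k + 1 then exp (S (k + 1)) else 1), Nat.add_sub_cancel,
    prod_congr rfl fun k _ => hsplit k, prod_mul_distrib]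
  have hlevel : ∏ k ∈ range m, (if n = k then exp (-S (k + 1)) else 1) = exp (-S (n + 1)) := by
    have h := prod_range_succ (fun k => if n = k then exp (-S (k + 1)) else 1) m
    rwa [prod_ite_eq, if_pos (mem_range.2 hn), hd, neg_zero, exp_zero, ite_self, mul_one,
      eq_comm] at h
  have hnext : ∏ k ∈ range m, (if n = k + 1 then exp (S (k + 1)) else 1) = exp (S n) := by
    have h := prod_range_succ' (fun k => if n = k then exp (S k) else 1) m
    rwa [prod_ite_eq, if_pos (mem_range.2 hn), h0, exp_zero, ite_self, mul_one, eq_comm] at h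
  rw [hlevel, hnext, ← exp_add]
  ring_nf

theorem sum_range_sub_average_eq_zero (β : ℕ → ℝ) {d : ℕ} (hd : d ≠ 0) :
    ∑ m ∈ range d, (β m - (∑ m ∈ range d, β m) / d) = 0 := by
  rw [sum_sub_distrib, sum_const, card_range, nsmul_eq_mul]
  field_simp
  ring

/-- Any diagonal unitary `U = Σ e^{-iβ_n}|n⟩⟨n|` equals the global phase
`e^{-iβ̄}` times the product of the `d-1` adjacent two-level Z-rotations with
angles `θ_k = 2 Σ_{n≤k} (β_n - β̄)`. -/
theorem stmt0 (d : ℕ) (β : ℕ → ℝ) :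
    Matrix.diagonal (fun n : Fin d => Complex.exp (-Complex.I * (β n : ℂ)))
      =
    Complex.exp (-Complex.I * ((((∑ n ∈ Finset.range d, β n) / d : ℝ)) : ℂ)) •
      (List.ofFn (fun k : Fin (d - 1) =>
        RZ d ⟨k.1, by have := k.2; omega⟩ ⟨k.1 + 1, by have := k.2; omega⟩
          (2 * ∑ n ∈ Finset.range (k.1 + 1),
            (β n - (∑ m ∈ Finset.range d, β m) / d)))).prod := by
  set βbar : ℝ := (∑ m ∈ range d, β m) / d
  simp only [RZ_adjacent]
  rw [Matrix.list_prod_ofFn_diagonal, ← Matrix.diagonal_smul]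
  congr 1
  funext n
  have hd : d ≠ 0 := n.pos.ne'
  rw [Pi.smul_apply, Finset.prod_apply, smul_eq_mul,
    prod_adjacent_phases (fun k => I * ↑(∑ m ∈ range k, (β m - βbar))) n.2 (by simp)
      (by simp [βbar, sum_range_sub_average_eq_zero β hd]),
    ← exp_add, sum_range_succ]
  push_cast
  ring_nf
end

section
/- Let d = 2M+1 be odd with M ≥ 1, φ_max > 0, and λ_n, μ as in the uniform symmetric digitization. Then for every k ∈ {0,…,d−2}, the centered partial sum Σ_{n=0}^{k} (λ_n² − μ) is nonzero. -/
/-!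
The levels form an arithmetic progression symmetric about zero, `λ_n = (φ_max / M) (n - M)`, so
the centered partial sums are `(φ_max / M)²` times those of `(n - M)²`. Summing squares gives
the closed form `(k + 1) (k - 2M) (2k + 1 - 2M) / 6` for the latter, and for `k < 2M` none of its
factors vanishes: the last one is odd.
-/

open Finset

noncomputable section

def centeredPartialSum (f : ℕ → ℝ) (d k : ℕ) : ℝ :=
  ∑ n ∈ range (k + 1), (f n - (∑ n ∈ range d, f n) / d)

theorem centeredPartialSum_const_mul (c : ℝ) (f : ℕ → ℝ) (d k : ℕ) :
    centeredPartialSum (fun n => c * f n) d k = c * centeredPartialSum f d k := by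
  rw [centeredPartialSum, centeredPartialSum, mul_sum]
  refine sum_congr rfl fun n _ => ?_
  rw [← mul_sum, mul_sub, mul_div_assoc]

theorem sum_range_natCast_sub_sq (a : ℝ) (m : ℕ) :
    ∑ n ∈ range m, ((n : ℝ) - a) ^ 2
      = (m : ℝ) * (m - 1) * (2 * m - 1) / 6 - a * m * (m - 1) + m * a ^ 2 := by
  induction m with
  | zero => simp
  | succ m ih =>
    rw [sum_range_succ, ih]
    push_cast
    ring

theorem centeredPartialSum_natCast_sub_sq (M k : ℕ) :
    centeredPartialSum (fun n => ((n : ℝ) - M) ^ 2) (2 * M + 1) k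
      = ((k : ℝ) + 1) * (k - 2 * M) * (2 * k + 1 - 2 * M) / 6 := by
  rw [centeredPartialSum, sum_sub_distrib, sum_const, card_range, sum_range_natCast_sub_sq,
    sum_range_natCast_sub_sq, nsmul_eq_mul]
  push_cast
  field_simp
  ring

theorem natCast_add_one_mul_sub_mul_sub_ne_zero {M k : ℕ} (hk : k < 2 * M) :
    ((k : ℝ) + 1) * (k - 2 * M) * (2 * k + 1 - 2 * M) ≠ 0 := by
  have hodd : ((2 * k + 1 : ℕ) : ℝ) ≠ ((2 * M : ℕ) : ℝ) := by exact_mod_cast (by omega)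
  have hlt : (k : ℝ) < 2 * M := by exact_mod_cast hk
  push_cast at hodd
  exact mul_ne_zero (mul_ne_zero (by positivity) (by linarith)) (sub_ne_zero.mpr hodd)

end

/-- the centered partial sums of the squared eigenvalues of the
uniform symmetric field digitization are nonzero for every `k ∈ {0,…,d-2}`. -/
theorem stmt3 (M : ℕ) (hM : 1 ≤ M) (φmax : ℝ) (hφ : 0 < φmax)
    (d : ℕ) (hd : d = 2 * M + 1)
    (lam : ℕ → ℝ) (hlam : ∀ n, lam n = -φmax + n * (2 * φmax / ((d : ℝ) - 1)))
    (μ : ℝ) (hμ : μ = (∑ n ∈ Finset.range d, (lam n) ^ 2) / d) :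
    ∀ k : ℕ, k ≤ d - 2 →
      ∑ n ∈ Finset.range (k + 1), ((lam n) ^ 2 - μ) ≠ 0 := by
  intro k hk
  subst hd hμ
  have hMpos : (0 : ℝ) < M := by exact_mod_cast hM
  have hlam_sq : (fun n => lam n ^ 2) = fun n : ℕ => (φmax / M) ^ 2 * ((n : ℝ) - M) ^ 2 := by
    funext n
    rw [hlam]
    push_cast
    field_simp
    ring
  change centeredPartialSum (fun n => lam n ^ 2) (2 * M + 1) k ≠ 0
  rw [hlam_sq, centeredPartialSum_const_mul, centeredPartialSum_natCast_sub_sq]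
  have hfactors := natCast_add_one_mul_sub_mul_sub_ne_zero (show k < 2 * M by omega)
  exact mul_ne_zero (by positivity) (div_ne_zero hfactors (by norm_num))
end

section
/- For the uniform symmetric grid λ_n = −φ_max + (2φ_max/(d−1))·n, n = 0,…,d−1, with d odd and ω = e^{2πi/d}, the discrete Fourier coefficients β_r = (1/d) Σ_{n=0}^{d−1} λ_n² ω^{−rn} satisfy β_0 = φ_max² (d+1)/(3(d−1)) and, for r = 1,…,d−1, β_r = (2φ_max²/(d−1)²) · e^{iπr/d} · cos(πr/d)/sin²(πr/d). -/
open Finset Complex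
open scoped Real

/-!
Writing `λ_n = c (2n - (d - 1))` with `c = φ_max / (d - 1)`, the coefficient `β_r` is `c² / d` times
`Σ (2n - (d - 1))² z^n` with `z = e^{-2πir/d}`. Summation by parts against `z^d = 1` gives
`(z - 1)² Σ = -4d (z + 1)` for `z ≠ 1`, and `3 Σ = d (d² - 1)` for `z = 1`. Finally, for
`z = e^{-2iθ}` one has `z + 1 = 2 e^{-iθ} cos θ` and `z - 1 = -2i e^{-iθ} sin θ`.
-/

section

variable {R : Type*} [CommRing R]

theorem sum_range_sq_two_mul_add (d : ℕ) (a : R) :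
    3 * ∑ n ∈ range d, (2 * (n : R) + a) ^ 2
      = d * (2 * (d - 1) * (2 * d - 1) + 6 * a * (d - 1) + 3 * a ^ 2) := by
  induction d with
  | zero => simp
  | succ k ih => rw [sum_range_succ, mul_add, ih]; push_cast; ring

theorem sum_range_centered_sq (d : ℕ) :
    3 * ∑ n ∈ range d, (2 * (n : R) - (d - 1)) ^ 2 = d * ((d : R) ^ 2 - 1) := by
  simp_rw [sub_eq_add_neg, sum_range_sq_two_mul_add]
  ring

theorem sub_one_mul_sum_range_mul_pow (d : ℕ) (z : R) :
    (z - 1) * ∑ n ∈ range d, (n : R) * z ^ n = d * z ^ d - z * ∑ n ∈ range d, z ^ n := by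
  induction d with
  | zero => simp
  | succ k ih => rw [sum_range_succ, mul_add, ih, sum_range_succ]; push_cast; ring

theorem sub_one_mul_sum_range_sq_mul_pow (d : ℕ) (z : R) :
    (z - 1) * ∑ n ∈ range d, (n : R) ^ 2 * z ^ n
      = d ^ 2 * z ^ d - z * (2 * ∑ n ∈ range d, (n : R) * z ^ n + ∑ n ∈ range d, z ^ n) := by
  induction d with
  | zero => simp
  | succ k ih =>
    rw [sum_range_succ, mul_add, ih, sum_range_succ, sum_range_succ]; push_cast; ring

end

theorem sub_one_sq_mul_sum_range_centered_sq_mul_pow {K : Type*} [Field K] {d : ℕ} {z : K}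
    (hzd : z ^ d = 1) (hz : z ≠ 1) :
    (z - 1) ^ 2 * ∑ n ∈ range d, (2 * (n : K) - (d - 1)) ^ 2 * z ^ n = -4 * d * (z + 1) := by
  have h0 : ∑ n ∈ range d, z ^ n = 0 := by rw [geom_sum_eq hz, hzd, sub_self, zero_div]
  have h1 := sub_one_mul_sum_range_mul_pow d z
  have h2 := sub_one_mul_sum_range_sq_mul_pow d z
  rw [hzd, h0, mul_zero, sub_zero, mul_one] at h1
  rw [hzd, h0, add_zero, mul_one] at h2
  have hexpand : ∑ n ∈ range d, (2 * (n : K) - (d - 1)) ^ 2 * z ^ n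
      = 4 * ∑ n ∈ range d, (n : K) ^ 2 * z ^ n - 4 * (d - 1) * ∑ n ∈ range d, (n : K) * z ^ n
        + (d - 1) ^ 2 * ∑ n ∈ range d, z ^ n := by
    simp only [mul_sum, ← sum_sub_distrib, ← sum_add_distrib]
    exact sum_congr rfl fun n _ ↦ by ring
  rw [hexpand, h0]
  linear_combination 4 * (z - 1) * h2 - (8 * z + 4 * (d - 1) * (z - 1)) * h1

theorem exp_neg_two_mul_I_add_one (θ : ℂ) : exp (-2 * θ * I) + 1 = 2 * exp (-θ * I) * cos θ := by
  rw [show 2 * exp (-θ * I) * cos θ = exp (-θ * I) * (2 * cos θ) by ring, two_cos, mul_add,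
    ← exp_add, ← exp_add]
  ring_nf
  simp [add_comm]

theorem exp_neg_two_mul_I_sub_one (θ : ℂ) :
    exp (-2 * θ * I) - 1 = -2 * I * exp (-θ * I) * sin θ := by
  have hsq : exp (-θ * I) * exp (-θ * I) = exp (-2 * θ * I) := by rw [← exp_add]; ring_nf
  have hinv : exp (-θ * I) * exp (θ * I) = 1 := by rw [← exp_add]; simp
  rw [show -2 * I * exp (-θ * I) * sin θ = -I * (exp (-θ * I) * (2 * sin θ)) by ring, two_sin]
  linear_combination -hsq + hinv + (exp (-θ * I) * (exp (-θ * I) - exp (θ * I))) * I_sq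

theorem inv_mul_sum_range_centered_sq_mul_exp_pow {d : ℕ} (hd : d ≠ 0) {θ : ℂ}
    (hθ : exp (-2 * θ * I) ^ d = 1) (hsin : sin θ ≠ 0) :
    1 / d * ∑ n ∈ range d, (2 * (n : ℂ) - (d - 1)) ^ 2 * exp (-2 * θ * I) ^ n
      = 2 * exp (θ * I) * cos θ / sin θ ^ 2 := by
  have hz1 : exp (-2 * θ * I) - 1 ≠ 0 := by
    rw [exp_neg_two_mul_I_sub_one]; simp [hsin, exp_ne_zero]
  have hsum := sub_one_sq_mul_sum_range_centered_sq_mul_pow hθ (sub_ne_zero.mp hz1)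
  rw [eq_div_of_mul_eq (pow_ne_zero 2 hz1) ((mul_comm _ _).trans hsum),
    exp_neg_two_mul_I_add_one, exp_neg_two_mul_I_sub_one]
  have he : exp (θ * I) * exp (-(θ * I)) = 1 := by rw [← exp_add]; simp
  field_simp
  linear_combination (-4 * I ^ 2 * cos θ) * he - 4 * cos θ * I_sq

theorem exp_neg_two_mul_pi_mul_div_mul_I_pow (r : ℕ) {d : ℕ} (hd : d ≠ 0) :
    exp (-2 * (π * r / d) * I) ^ d = 1 := by
  rw [← exp_nat_mul, show (d : ℂ) * (-2 * (π * r / d) * I) = (-r : ℤ) * (2 * π * I) by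
    push_cast; field_simp]
  exact exp_int_mul_two_pi_mul_I _

theorem Real.sin_pi_mul_div_pos {r d : ℕ} (hr : 0 < r) (hrd : r < d) :
    0 < Real.sin (π * r / d) := by
  have hdpos : (0 : ℝ) < d := by exact_mod_cast hr.trans hrd
  refine Real.sin_pos_of_pos_of_lt_pi (by positivity) ?_
  rw [div_lt_iff₀ hdpos]
  exact mul_lt_mul_of_pos_left (by exact_mod_cast hrd) Real.pi_pos

theorem stmt5_general (d : ℕ) (hd : 3 ≤ d) (φmax : ℝ)
    (lam : ℕ → ℝ) (hlam : ∀ n, lam n = -φmax + (2 * φmax / ((d : ℝ) - 1)) * n)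
    (β : ℕ → ℂ)
    (hβ : ∀ r, β r = (1 / (d : ℂ)) * ∑ n ∈ Finset.range d,
      ((lam n : ℂ)) ^ 2 * Complex.exp (-(2 * (Real.pi : ℂ) * Complex.I * r * n) / d)) :
    β 0 = ((φmax ^ 2 * ((d : ℝ) + 1) / (3 * ((d : ℝ) - 1)) : ℝ) : ℂ)
    ∧ ∀ r, 1 ≤ r → r ≤ d - 1 →
        β r = ((2 * φmax ^ 2 / ((d : ℝ) - 1) ^ 2 : ℝ) : ℂ)
                * Complex.exp ((Real.pi : ℂ) * Complex.I * r / d)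
                * ((Real.cos (Real.pi * r / d) / (Real.sin (Real.pi * r / d)) ^ 2 : ℝ) : ℂ) := by
  have hd0 : d ≠ 0 := by omega
  have hd1 : (d : ℂ) - 1 ≠ 0 := sub_ne_zero.mpr (by exact_mod_cast (by omega : d ≠ 1))
  set c : ℂ := φmax / (d - 1)
  have hβz : ∀ r : ℕ, β r = c ^ 2 * (1 / d *
      ∑ n ∈ range d, (2 * (n : ℂ) - (d - 1)) ^ 2 * exp (-2 * (π * r / d) * I) ^ n) := by
    intro r
    rw [hβ, mul_sum, mul_sum, mul_sum]
    refine sum_congr rfl fun n _ ↦ ?_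
    rw [← exp_nat_mul, hlam, show (n : ℂ) * (-2 * (π * r / d) * I) = -(2 * π * I * r * n) / d by
      ring]
    push_cast [c]
    field_simp
    ring
  constructor
  · have hsum : ∑ n ∈ range d, (2 * (n : ℂ) - (d - 1)) ^ 2 = d * ((d : ℂ) ^ 2 - 1) / 3 :=
      eq_div_of_mul_eq three_ne_zero ((mul_comm _ _).trans (sum_range_centered_sq d))
    rw [hβz 0]
    simp only [CharP.cast_eq_zero, mul_zero, zero_div, zero_mul, exp_zero, one_pow,
      mul_one, hsum]
    push_cast [c]
    field_simp
    ring
  · intro r hr1 hr2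
    have hsin : sin (π * r / d : ℂ) ≠ 0 := by
      exact_mod_cast (Real.sin_pi_mul_div_pos (r := r) (d := d) (by omega) (by omega)).ne'
    rw [hβz r, inv_mul_sum_range_centered_sq_mul_exp_pow hd0
      (exp_neg_two_mul_pi_mul_div_mul_I_pow r hd0) hsin]
    push_cast [c]
    rw [div_pow, show (π : ℂ) * r / d * I = π * I * r / d by ring]
    ring

/-- explicit values of the discrete Fourier coefficients of the
squared uniform symmetric grid `λ_n = -φ_max + (2φ_max/(d-1)) n`. -/
theorem stmt5 (d : ℕ) (hd : 3 ≤ d) (hodd : Odd d) (φmax : ℝ) (hφ : 0 < φmax)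
    (lam : ℕ → ℝ) (hlam : ∀ n, lam n = -φmax + (2 * φmax / ((d : ℝ) - 1)) * n)
    (β : ℕ → ℂ)
    (hβ : ∀ r, β r = (1 / (d : ℂ)) * ∑ n ∈ Finset.range d,
      ((lam n : ℂ)) ^ 2 * Complex.exp (-(2 * (Real.pi : ℂ) * Complex.I * r * n) / d)) :
    β 0 = ((φmax ^ 2 * ((d : ℝ) + 1) / (3 * ((d : ℝ) - 1)) : ℝ) : ℂ)
    ∧ ∀ r, 1 ≤ r → r ≤ d - 1 →
        β r = ((2 * φmax ^ 2 / ((d : ℝ) - 1) ^ 2 : ℝ) : ℂ)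
                * Complex.exp ((Real.pi : ℂ) * Complex.I * r / d)
                * ((Real.cos (Real.pi * r / d) / (Real.sin (Real.pi * r / d)) ^ 2 : ℝ) : ℂ) :=
  stmt5_general d hd φmax lam hlam β hβ
end
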